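/- β-reduction and η-expansion preserve linearity: if Γ ⊢ t and t reduces to t′ by contracting a β-redex (λx[t₁])(u) ↦ t₁{u/x} occurring in t, then Γ ⊢ t′; and if Γ ⊢ t, then Γ ⊢ λx[t(x)] for any fresh variable x not occurring in Γ or t. -/

import Mathlib

/-! ## Lambda terms and linearity -/

inductive Term : Type
  | var : ℕ → Term
  | app : Term → Term → Term
  | lam : ℕ → Term → Term
deriving DecidableEq

namespace Term

/-- total number of applications and abstractions -/
def size : Term → ℕ
  | var _ => 0
  | app t u => size t + size u + 1
  | lam _ t => size t + 1

def apps : Term → ℕ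
  | var _ => 0
  | app t u => apps t + apps u + 1
  | lam _ t => apps t

def lams : Term → ℕ
  | var _ => 0
  | app t u => lams t + lams u
  | lam _ t => lams t + 1

/-- all variable names occurring in a term (free, bound or binding) -/
def varsList : Term → List ℕ
  | var z => [z]
  | app t u => varsList t ++ varsList u
  | lam z t => z :: varsList t

/-- the list of free variables -/
def freeList : Term → List ℕ
  | var z => [z]
  | app t u => freeList t ++ freeList u
  | lam z t => (freeList t).filter (fun y => y ≠ z)

/-- the list of bound (binder) variables -/
def boundVars : Term → List ℕ
  | var _ => []
  | app t u => boundVars t ++ boundVars u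
  | lam z t => z :: boundVars t

/-- rename the free occurrences of `x` to `y` -/
def rename (x y : ℕ) : Term → Term
  | var z => if z = x then var y else var z
  | app t u => app (rename x y t) (rename x y u)
  | lam z t => if z = x then lam z t else lam z (rename x y t)

/-- substitution of `u` for the free occurrences of `x` -/
def subst (u : Term) (x : ℕ) : Term → Term
  | var z => if z = x then u else var z
  | app t₁ t₂ => app (subst u x t₁) (subst u x t₂)
  | lam z t => if z = x then lam z t else lam z (subst u x t)

end Term

/-- the linearity relation `Γ ⊢ t` between contexts and lambda terms -/
inductive Linear : List ℕ → Term → Prop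
  | var (x : ℕ) : Linear [x] (.var x)
  | app {Γ Δ : List ℕ} {t u : Term} : Linear Γ t → Linear Δ u →
      (Γ ++ Δ).Nodup → Linear (Γ ++ Δ) (.app t u)
  | lam {Γ : List ℕ} {x : ℕ} {t : Term} : Linear (Γ ++ [x]) t → Linear Γ (.lam x t)
  | exch {Γ Δ : List ℕ} {x y : ℕ} {t : Term} :
      Linear (Γ ++ y :: x :: Δ) t → Linear (Γ ++ x :: y :: Δ) t


/-- one-step beta-reduction: contraction of a beta-redex
`(λx[t])(u) ↦ t{u/x}` occurring somewhere in a term (as usual, the bound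
variables of the redex are assumed suitably renamed so that the substitution
is capture-free) -/
inductive Beta : Term → Term → Prop
  | redex {x : ℕ} {t u : Term} :
      (∀ z ∈ Term.freeList u, z ∉ Term.boundVars t) →
      Beta (.app (.lam x t) u) (Term.subst u x t)
  | appL {t t' u : Term} : Beta t t' → Beta (.app t u) (.app t' u)
  | appR {t u u' : Term} : Beta u u' → Beta (.app t u) (.app t u')
  | lam {x : ℕ} {t t' : Term} : Beta t t' → Beta (.lam x t) (.lam x t')


/-!
`Γ ⊢ t` says two independent things: `t` is linear in a context-free sense (every abstracted
variable occurs free in its body, and the two sides of an application share no free variable),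
and `Γ` lists the free variables of `t` in some order; exchange makes the order irrelevant.
Both are preserved by contracting a capture-free redex `(λx[t])(u)`: since `x` occurs free in `t`
exactly once, `t{u/x}` is linear and its free variables are those of `u` followed by those of
`t` other than `x`, i.e. a permutation of the free variables of the redex. For η-expansion by a
fresh `x`, the term `λx[t(x)]` is linear with the same free variables as `t`.
-/

namespace Term

/-- `Linear Γ t` holds exactly when `t.IsLinear` and `Γ` is a permutation of `freeList t`
(`linear_iff`). -/
def IsLinear : Term → Prop
  | var _ => True
  | app t u => IsLinear t ∧ IsLinear u ∧ (freeList t).Disjoint (freeList u)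
  | lam x t => IsLinear t ∧ x ∈ freeList t

theorem IsLinear.nodup_freeList : ∀ {t : Term}, IsLinear t → (freeList t).Nodup
  | var z, _ => List.nodup_singleton z
  | app _ _, ⟨ht, hu, hd⟩ => List.nodup_append'.2 ⟨ht.nodup_freeList, hu.nodup_freeList, hd⟩
  | lam _ _, ⟨ht, _⟩ => ht.nodup_freeList.filter _

theorem freeList_lam_eq_erase {x : ℕ} {t : Term} (h : (freeList t).Nodup) :
    freeList (lam x t) = (freeList t).erase x := by
  rw [freeList, h.erase_eq_filter]
  grind

theorem freeList_subset_varsList : ∀ t : Term, freeList t ⊆ varsList t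
  | var _ => List.Subset.refl _
  | app t u => List.append_subset.2
      ⟨List.subset_append_of_subset_left _ (freeList_subset_varsList t),
        List.subset_append_of_subset_right _ (freeList_subset_varsList u)⟩
  | lam _ t => fun _ h =>
      List.mem_cons_of_mem _ (freeList_subset_varsList t (List.mem_of_mem_filter h))

theorem subst_of_not_mem_freeList {u : Term} {x : ℕ} :
    ∀ {t : Term}, x ∉ freeList t → subst u x t = t
  | var z, h => by
    simp only [freeList, List.mem_singleton] at h
    simp [subst, Ne.symm h]
  | app t₁ t₂, h => by
    simp only [freeList, List.mem_append, not_or] at h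
    simp only [subst, subst_of_not_mem_freeList h.1, subst_of_not_mem_freeList h.2]
  | lam z t, h => by
    by_cases hz : z = x
    · simp [subst, hz]
    · simp only [freeList, List.mem_filter, decide_eq_true_eq, not_and, not_not] at h
      simp only [subst, if_neg hz, subst_of_not_mem_freeList fun hx => hz (h hx).symm]

theorem IsLinear.freeList_subst_perm {u : Term} {x : ℕ} :
    ∀ {t : Term}, IsLinear t → x ∈ freeList t →
      (∀ z ∈ freeList u, z ∉ boundVars t) →
      (freeList (subst u x t)).Perm (freeList u ++ (freeList t).erase x)
  | var z, _, hx, _ => by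
    obtain rfl : x = z := List.mem_singleton.1 hx
    simp [subst, freeList]
  | app t₁ t₂, ⟨h₁, h₂, hd⟩, hx, hcap => by
    simp only [boundVars, List.mem_append, not_or] at hcap
    simp only [subst, freeList]
    rcases List.mem_append.1 hx with hx₁ | hx₂
    · rw [subst_of_not_mem_freeList (hd hx₁), List.erase_append_left _ hx₁,
        ← List.append_assoc]
      exact (h₁.freeList_subst_perm hx₁ fun z hz => (hcap z hz).1).append_right _
    · rw [subst_of_not_mem_freeList (hd.symm hx₂), List.erase_append_right _ (hd.symm hx₂)]
      refine ((h₂.freeList_subst_perm hx₂ fun z hz => (hcap z hz).2).append_left _).trans ?_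
      simpa only [← List.append_assoc] using List.perm_append_comm.append_right _
  | lam z t, ⟨ht, _⟩, hx, hcap => by
    simp only [freeList, List.mem_filter, decide_eq_true_eq] at hx
    have hzu : z ∉ freeList u := fun hz => hcap z hz List.mem_cons_self
    rw [subst, if_neg (Ne.symm hx.2), freeList, freeList, List.erase_filter]
    refine ((ht.freeList_subst_perm hx.1 fun w hw hb =>
      hcap w hw (List.mem_cons_of_mem _ hb)).filter _).trans ?_
    rw [List.filter_append,
      List.filter_eq_self.2 fun w hw => by simpa using ne_of_mem_of_not_mem hw hzu]

theorem IsLinear.subst {u : Term} {x : ℕ} :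
    ∀ {t : Term}, IsLinear t → IsLinear u → x ∈ freeList t →
      (∀ z ∈ freeList u, z ∉ boundVars t) → (freeList u).Disjoint ((freeList t).erase x) →
      IsLinear (subst u x t)
  | var z, _, hu, hx, _, _ => by
    obtain rfl : x = z := List.mem_singleton.1 hx
    simpa [Term.subst] using hu
  | app t₁ t₂, ⟨h₁, h₂, hd⟩, hu, hx, hcap, hfresh => by
    simp only [boundVars, List.mem_append, not_or] at hcap
    simp only [freeList] at hfresh
    rcases List.mem_append.1 hx with hx₁ | hx₂
    · rw [List.erase_append_left _ hx₁, List.disjoint_append_right] at hfresh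
      have hcap₁ : ∀ z ∈ freeList u, z ∉ boundVars t₁ := fun z hz => (hcap z hz).1
      rw [Term.subst, subst_of_not_mem_freeList (hd hx₁)]
      refine ⟨h₁.subst hu hx₁ hcap₁ hfresh.1, h₂, ?_⟩
      refine List.disjoint_of_subset_left (h₁.freeList_subst_perm hx₁ hcap₁).subset ?_
      exact List.disjoint_append_left.2
        ⟨hfresh.2, List.disjoint_of_subset_left List.erase_subset hd⟩
    · rw [List.erase_append_right _ (hd.symm hx₂), List.disjoint_append_right] at hfresh
      have hcap₂ : ∀ z ∈ freeList u, z ∉ boundVars t₂ := fun z hz => (hcap z hz).2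
      rw [Term.subst, subst_of_not_mem_freeList (hd.symm hx₂)]
      refine ⟨h₁, h₂.subst hu hx₂ hcap₂ hfresh.2, List.Disjoint.symm ?_⟩
      refine List.disjoint_of_subset_left (h₂.freeList_subst_perm hx₂ hcap₂).subset ?_
      exact List.disjoint_append_left.2
        ⟨hfresh.1, List.disjoint_of_subset_left List.erase_subset hd.symm⟩
  | lam z t, ⟨ht, hzt⟩, hu, hx, hcap, hfresh => by
    simp only [freeList, List.mem_filter, decide_eq_true_eq] at hx
    have hzu : z ∉ freeList u := fun hz => hcap z hz List.mem_cons_self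
    have hcap' : ∀ w ∈ freeList u, w ∉ boundVars t := fun w hw hb =>
      hcap w hw (List.mem_cons_of_mem _ hb)
    have hfresh' : (freeList u).Disjoint ((freeList t).erase x) := fun w hw hwt =>
      hfresh hw (by
        rw [freeList, List.erase_filter]
        exact List.mem_filter.2 ⟨hwt, by simpa using ne_of_mem_of_not_mem hw hzu⟩)
    rw [Term.subst, if_neg (Ne.symm hx.2)]
    refine ⟨ht.subst hu hx.1 hcap' hfresh',
      (ht.freeList_subst_perm hx.1 hcap').mem_iff.2 ?_⟩
    exact List.mem_append_right _ ((List.mem_erase_of_ne fun h => hx.2 h.symm).2 hzt)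

end Term

open Term

theorem Linear.perm {Γ Δ : List ℕ} {t : Term} (h : Linear Γ t) (hp : Γ.Perm Δ) :
    Linear Δ t := by
  suffices ∀ S : List ℕ, Linear (S ++ Γ) t → Linear (S ++ Δ) t by
    simpa using this [] (by simpa using h)
  clear h
  induction hp with
  | nil => exact fun _ h => h
  | cons x _ ih => exact fun S h => by simpa using ih (S ++ [x]) (by simpa using h)
  | swap => exact fun _ h => Linear.exch h
  | trans _ _ ih₁ ih₂ => exact fun S h => ih₂ S (ih₁ S h)

theorem Linear.isLinear_and_perm {Γ : List ℕ} {t : Term} (h : Linear Γ t) :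
    t.IsLinear ∧ Γ.Perm (freeList t) := by
  induction h with
  | var => exact ⟨trivial, .refl _⟩
  | app _ _ hnd ih₁ ih₂ =>
    have hp := ih₁.2.append ih₂.2
    exact ⟨⟨ih₁.1, ih₂.1, List.disjoint_of_nodup_append (hp.nodup_iff.1 hnd)⟩, hp⟩
  | @lam Γ x t _ ih =>
    refine ⟨⟨ih.1, ih.2.subset (by simp)⟩, ?_⟩
    rw [freeList_lam_eq_erase ih.1.nodup_freeList]
    simpa using ((List.perm_append_singleton x Γ).symm.trans ih.2).erase x
  | exch _ ih => exact ⟨ih.1, ((List.Perm.swap _ _ _).append_left _).trans ih.2⟩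

theorem Term.IsLinear.linear_freeList : ∀ {t : Term}, t.IsLinear → Linear (freeList t) t
  | var z, _ => Linear.var z
  | app _ _, ⟨ht, hu, hd⟩ => Linear.app ht.linear_freeList hu.linear_freeList
      (List.nodup_append'.2 ⟨ht.nodup_freeList, hu.nodup_freeList, hd⟩)
  | lam _ _, ⟨ht, hx⟩ => Linear.lam <| ht.linear_freeList.perm <| by
      rw [freeList_lam_eq_erase ht.nodup_freeList]
      exact (List.perm_cons_erase hx).trans (List.perm_append_singleton _ _).symm

theorem linear_iff {Γ : List ℕ} {t : Term} :
    Linear Γ t ↔ t.IsLinear ∧ Γ.Perm (freeList t) :=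
  ⟨Linear.isLinear_and_perm, fun ⟨ht, hp⟩ => ht.linear_freeList.perm hp.symm⟩

theorem Beta.isLinear_and_perm {t t' : Term} (h : Beta t t') (ht : t.IsLinear) :
    t'.IsLinear ∧ (freeList t').Perm (freeList t) := by
  induction h with
  | redex hcap =>
    obtain ⟨⟨ht, hx⟩, hu, hd⟩ := ht
    rw [freeList_lam_eq_erase ht.nodup_freeList] at hd
    refine ⟨ht.subst hu hx hcap hd.symm, (ht.freeList_subst_perm hx hcap).trans ?_⟩
    rw [freeList, freeList_lam_eq_erase ht.nodup_freeList]
    exact List.perm_append_comm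
  | appL _ ih =>
    obtain ⟨ht, hu, hd⟩ := ht
    obtain ⟨ht', hp⟩ := ih ht
    exact ⟨⟨ht', hu, List.disjoint_of_subset_left hp.subset hd⟩, hp.append_right _⟩
  | appR _ ih =>
    obtain ⟨ht, hu, hd⟩ := ht
    obtain ⟨hu', hp⟩ := ih hu
    exact ⟨⟨ht, hu', (List.disjoint_of_subset_left hp.subset hd.symm).symm⟩,
      hp.append_left _⟩
  | lam _ ih =>
    obtain ⟨ht, hx⟩ := ht
    obtain ⟨ht', hp⟩ := ih ht
    exact ⟨⟨ht', hp.symm.subset hx⟩, hp.filter _⟩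

theorem Term.IsLinear.eta {t : Term} {x : ℕ} (ht : t.IsLinear) (hx : x ∉ freeList t) :
    (lam x (app t (var x))).IsLinear ∧ freeList (lam x (app t (var x))) = freeList t := by
  have happ : (app t (var x)).IsLinear := ⟨ht, trivial, List.disjoint_singleton.2 hx⟩
  refine ⟨⟨happ, List.mem_append_right _ (List.mem_singleton_self x)⟩, ?_⟩
  rw [freeList_lam_eq_erase happ.nodup_freeList, freeList, List.erase_append_right _ hx]
  simp [freeList]

/-- Beta-reduction and eta-expansion preserve linearity: if `Γ ⊢ t` and `t`
reduces to `t'` by contracting a beta-redex then `Γ ⊢ t'`; and if `Γ ⊢ t`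
then `Γ ⊢ λx[t(x)]` for any fresh variable `x` not occurring in `Γ` or `t`. -/
theorem beta_eta_preserve_linearity :
    (∀ (Γ : List ℕ) (t t' : Term), Linear Γ t → Beta t t' → Linear Γ t') ∧
    (∀ (Γ : List ℕ) (t : Term) (x : ℕ), Linear Γ t → x ∉ Γ →
      x ∉ Term.varsList t → Linear Γ (.lam x (.app t (.var x)))) := by
  refine ⟨fun Γ t t' h hβ => ?_, fun Γ t x h _ hx => ?_⟩
  · obtain ⟨ht, hΓ⟩ := linear_iff.1 h
    obtain ⟨ht', hp⟩ := hβ.isLinear_and_perm ht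
    exact linear_iff.2 ⟨ht', hΓ.trans hp.symm⟩
  · obtain ⟨ht, hΓ⟩ := linear_iff.1 h
    obtain ⟨hη, hfree⟩ := ht.eta fun hxt => hx (freeList_subset_varsList t hxt)
    exact linear_iff.2 ⟨hη, hfree ▸ hΓ⟩
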